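/- Let N ≥ 1, let A be a nonempty bounded subset of ℝ^N and let δ > 0. Then for every s ∈ ℂ with Re s > dim̄_B A, the integral ∫_0^δ t^{s−N−1} |A_t| dt converges absolutely, and the following functional equation holds: ∫_{A_δ} d(x,A)^{s−N} dx = δ^{s−N} |A_δ| + (N − s) ∫_0^δ t^{s−N−1} |A_t| dt. -/

import Mathlib

open MeasureTheory Metric Filter Set
open scoped ENNReal Topology

/-- The upper `r`-dimensional Minkowski content of a subset of `ℝ^N`. -/
noncomputable def upperMink (N : ℕ) (A : Set (EuclideanSpace ℝ (Fin N))) (r : ℝ) : ℝ≥0∞ :=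
  Filter.limsup (fun t : ℝ => volume (thickening t A) / ENNReal.ofReal (t ^ ((N : ℝ) - r)))
    (𝓝[>] (0 : ℝ))

/-- The upper box (Minkowski) dimension of a subset of `ℝ^N`. -/
noncomputable def upperBoxDim (N : ℕ) (A : Set (EuclideanSpace ℝ (Fin N))) : ℝ :=
  sInf {r : ℝ | 0 < r ∧ upperMink N A r = 0}

/-!
With `c = s - N`, write `d(x,A)^c = δ^c - c ∫_{d(x,A)}^δ t^(c-1) dt` and integrate over `A_δ`;
exchanging the order of integration over `{(x,t) : d(x,A) < t ≤ δ}` turns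
`∫_{A_δ} ∫_{d(x,A)}^δ t^(c-1) dt dx` into `∫_0^δ t^(c-1) |A_t| dt`. Fubini applies because for
some `r < Re s` with `M^{*r}(A) = 0` we have `|A_t| ≤ t^(N-r)` near `0`, which makes
`t^(Re s - N - 1) |A_t|` integrable. The formula for `d(x,A)^c` needs `Re c > 0` or
`d(x,A) > 0`; if `Re s ≤ N`, then `r < N` forces `|closure A| = 0`, so `d(x,A) > 0` almost
everywhere.
-/

lemma integral_Ioc_indicator_Ioi_cpow {d δ : ℝ} (hd : 0 ≤ d) (hdδ : d ≤ δ) {c : ℂ} (hc : c ≠ 0)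
    (hreg : 0 < c.re ∨ 0 < d) :
    ∫ t in Ioc 0 δ, (Ioi d).indicator (fun t : ℝ => (t : ℂ) ^ (c - 1)) t =
      ((δ : ℂ) ^ c - (d : ℂ) ^ c) / c := by
  rw [setIntegral_indicator measurableSet_Ioi, Ioc_inter_Ioi, max_eq_right hd,
    ← intervalIntegral.integral_of_le hdδ, integral_cpow, sub_add_cancel]
  rcases hreg with h | h
  · left
    simpa using h
  · right
    refine ⟨fun h1 => hc (by linear_combination h1), ?_⟩
    rw [uIcc_of_le hdδ]
    exact fun h0 => h.not_ge h0.1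

section DistLayer

variable {X E : Type*} [PseudoMetricSpace X] [NormedAddCommGroup E] {A : Set X} {g : ℝ → E}

/-- Integrating over `t ∈ (0, δ]` gives `∫_{d(x,A)}^δ g`, integrating over `x ∈ A_δ` gives
`|A_t| • g t`. -/
noncomputable def distLayer (A : Set X) (g : ℝ → E) (p : X × ℝ) : E :=
  {p : X × ℝ | infDist p.1 A < p.2}.indicator (fun p => g p.2) p

lemma distLayer_eq_indicator_thickening (hA : A.Nonempty) (x : X) (t : ℝ) :
    distLayer A g (x, t) = (thickening t A).indicator (fun _ => g t) x := by
  by_cases hx : infDist x A < t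
  · rw [distLayer, indicator_of_mem (by exact hx),
      indicator_of_mem ((mem_thickening_iff_infDist_lt hA).2 hx)]
  · rw [distLayer, indicator_of_notMem (by exact hx),
      indicator_of_notMem (fun h => hx ((mem_thickening_iff_infDist_lt hA).1 h))]

lemma distLayer_eq_indicator_Ioi (x : X) (t : ℝ) :
    distLayer A g (x, t) = (Ioi (infDist x A)).indicator g t := rfl

lemma norm_distLayer (p : X × ℝ) : ‖distLayer A g p‖ = distLayer A (fun t => ‖g t‖) p :=
  norm_indicator_eq_indicator_norm _ p

variable [MeasurableSpace X] {μ : Measure X}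

lemma measurable_measureReal_thickening : Measurable fun t : ℝ => μ.real (thickening t A) :=
  (Monotone.measurable fun _ _ hst => measure_mono (thickening_mono hst A)).ennreal_toReal

lemma stronglyMeasurable_distLayer [OpensMeasurableSpace X] (hg : StronglyMeasurable g) :
    StronglyMeasurable (distLayer A g) :=
  (hg.comp_measurable measurable_snd).indicator
    (measurableSet_lt ((continuous_infDist_pt A).measurable.comp measurable_fst) measurable_snd)

lemma setIntegral_thickening_distLayer [OpensMeasurableSpace X] [NormedSpace ℝ E]
    [CompleteSpace E] (hA : A.Nonempty) {t δ : ℝ} (htδ : t ≤ δ) :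
    ∫ x in thickening δ A, distLayer A g (x, t) ∂μ = μ.real (thickening t A) • g t := by
  simp_rw [distLayer_eq_indicator_thickening (g := g) hA]
  rw [integral_indicator_const _ isOpen_thickening.measurableSet,
    measureReal_restrict_apply isOpen_thickening.measurableSet,
    inter_eq_self_of_subset_left (thickening_mono htδ A)]

lemma integrable_distLayer [OpensMeasurableSpace X] (hA : A.Nonempty) {δ : ℝ}
    (hfin : μ (thickening δ A) ≠ ∞) (hg : StronglyMeasurable g)
    (hint : IntegrableOn (fun t => μ.real (thickening t A) * ‖g t‖) (Ioc 0 δ)) :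
    Integrable (distLayer A g)
      ((μ.restrict (thickening δ A)).prod (volume.restrict (Ioc 0 δ))) := by
  have : IsFiniteMeasure (μ.restrict (thickening δ A)) := isFiniteMeasure_restrict.2 hfin
  refine (integrable_prod_iff' (stronglyMeasurable_distLayer hg).aestronglyMeasurable).2
    ⟨Eventually.of_forall fun t => ?_, hint.congr_fun (fun t ht => ?_) measurableSet_Ioc⟩
  · simp_rw [distLayer_eq_indicator_thickening hA]
    exact (integrable_const _).indicator isOpen_thickening.measurableSet
  · simp_rw [norm_distLayer, setIntegral_thickening_distLayer hA ht.2, smul_eq_mul]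

lemma integrableOn_cpow_mul_measureReal_thickening {c : ℂ} {δ : ℝ}
    (hint : IntegrableOn (fun t => μ.real (thickening t A) * ‖(t : ℂ) ^ (c - 1)‖) (Ioc 0 δ)) :
    IntegrableOn (fun t : ℝ => (t : ℂ) ^ (c - 1) * μ.real (thickening t A)) (Ioc 0 δ) := by
  refine (integrable_norm_iff ?_).1 (hint.congr_fun (fun t _ => ?_) measurableSet_Ioc)
  · exact ((Complex.measurable_ofReal.pow_const _).mul
      (Complex.measurable_ofReal.comp measurable_measureReal_thickening)).aestronglyMeasurable
  · rw [norm_mul, Complex.norm_real, Real.norm_of_nonneg measureReal_nonneg, mul_comm]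

theorem setIntegral_infDist_cpow [OpensMeasurableSpace X] (hA : A.Nonempty) {δ : ℝ}
    (hfin : μ (thickening δ A) ≠ ∞) {c : ℂ} (hc : c ≠ 0) (hreg : 0 < c.re ∨ μ (closure A) = 0)
    (hint : IntegrableOn (fun t => μ.real (thickening t A) * ‖(t : ℂ) ^ (c - 1)‖) (Ioc 0 δ)) :
    ∫ x in thickening δ A, (infDist x A : ℂ) ^ c ∂μ =
      (δ : ℂ) ^ c * μ.real (thickening δ A) -
        c * ∫ t in Ioc 0 δ, (t : ℂ) ^ (c - 1) * μ.real (thickening t A) := by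
  have : IsFiniteMeasure (μ.restrict (thickening δ A)) := isFiniteMeasure_restrict.2 hfin
  set g : ℝ → ℂ := fun t => (t : ℂ) ^ (c - 1)
  have hF := integrable_distLayer hA hfin
    (Complex.measurable_ofReal.pow_const (c - 1)).stronglyMeasurable hint
  have hpos : ∀ᵐ x ∂μ.restrict (thickening δ A), 0 < c.re ∨ 0 < infDist x A := by
    rcases hreg with h | h
    · exact Eventually.of_forall fun _ => Or.inl h
    · filter_upwards [ae_restrict_of_ae (measure_eq_zero_iff_ae_notMem.1 h)] with x hx
      exact Or.inr (infDist_nonneg.lt_of_ne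
        (Ne.symm fun h0 => hx ((mem_closure_iff_infDist_zero hA).2 h0)))
  have hinner : ∀ᵐ x ∂μ.restrict (thickening δ A),
      ∫ t in Ioc 0 δ, distLayer A g (x, t) = ((δ : ℂ) ^ c - (infDist x A : ℂ) ^ c) / c := by
    filter_upwards [ae_restrict_mem isOpen_thickening.measurableSet, hpos] with x hx hx'
    simp_rw [distLayer_eq_indicator_Ioi]
    exact integral_Ioc_indicator_Ioi_cpow infDist_nonneg
      ((mem_thickening_iff_infDist_lt hA).1 hx).le hc hx'
  have hdist : Integrable (fun x => (infDist x A : ℂ) ^ c) (μ.restrict (thickening δ A)) := by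
    refine ((integrable_const ((δ : ℂ) ^ c)).sub
      ((hF.integral_prod_left.congr hinner).const_mul c)).congr (Eventually.of_forall fun x => ?_)
    simp only [Pi.sub_apply]
    field_simp
    ring
  have hswap := integral_integral_swap (f := fun x t => distLayer A g (x, t)) hF
  rw [integral_congr_ae hinner, integral_div, integral_sub (integrable_const _) hdist,
    integral_const, setIntegral_congr_fun measurableSet_Ioc
      (fun t ht => setIntegral_thickening_distLayer hA ht.2)] at hswap
  have hsmul : ∀ t, μ.real (thickening t A) • g t = (t : ℂ) ^ (c - 1) * μ.real (thickening t A) :=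
    fun t => by rw [Complex.real_smul, mul_comm]
  simp only [hsmul, measureReal_restrict_apply_univ, Complex.real_smul, div_eq_iff hc] at hswap
  linear_combination -hswap

end DistLayer

section Minkowski

variable {N : ℕ} {A : Set (EuclideanSpace ℝ (Fin N))}

lemma upperMink_add_one_eq_zero (hb : Bornology.IsBounded A) : upperMink N A (N + 1) = 0 := by
  have hratio : ∀ᶠ t in 𝓝[>] (0 : ℝ),
      volume (thickening t A) / ENNReal.ofReal (t ^ ((N : ℝ) - (N + 1))) ≤
        volume (thickening 1 A) * ENNReal.ofReal t := by
    filter_upwards [Ioo_mem_nhdsGT zero_lt_one] with t ht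
    rw [show (N : ℝ) - (N + 1) = -1 by ring, Real.rpow_neg_one, ENNReal.ofReal_inv_of_pos ht.1,
      div_eq_mul_inv, inv_inv]
    gcongr
    exact ht.2.le
  have hlim : Tendsto (fun t : ℝ => volume (thickening 1 A) * ENNReal.ofReal t) (𝓝[>] 0) (𝓝 0) := by
    simpa using ENNReal.Tendsto.const_mul
      (ENNReal.tendsto_ofReal
        (tendsto_nhdsWithin_of_tendsto_nhds (s := Ioi 0) (a := 0) tendsto_id))
      (Or.inr ((hb.thickening (δ := 1)).measure_lt_top (μ := volume)).ne)
  exact le_antisymm ((limsup_le_limsup hratio).trans_eq hlim.limsup_eq) bot_le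

lemma exists_lt_upperMink_eq_zero (hb : Bornology.IsBounded A) {σ : ℝ}
    (hσ : upperBoxDim N A < σ) : ∃ r < σ, upperMink N A r = 0 := by
  obtain ⟨r, hr, hrσ⟩ := (csInf_lt_iff (s := {r : ℝ | 0 < r ∧ upperMink N A r = 0})
    ⟨0, fun r hr => hr.1.le⟩ ⟨N + 1, by positivity, upperMink_add_one_eq_zero hb⟩).1 hσ
  exact ⟨r, hrσ, hr.2⟩

lemma eventually_volume_thickening_le {r : ℝ} (h : upperMink N A r = 0) :
    ∀ᶠ t in 𝓝[>] (0 : ℝ), volume (thickening t A) ≤ ENNReal.ofReal (t ^ ((N : ℝ) - r)) := by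
  filter_upwards [eventually_lt_of_limsup_lt (h.trans_lt zero_lt_one), self_mem_nhdsWithin]
    with t ht (ht0 : 0 < t)
  have hne : ENNReal.ofReal (t ^ ((N : ℝ) - r)) ≠ 0 := by positivity
  simpa using (ENNReal.div_le_iff hne ENNReal.ofReal_ne_top).1 ht.le

lemma volume_closure_eq_zero_of_upperMink_eq_zero {r : ℝ} (h : upperMink N A r = 0)
    (hr : r < N) : volume (closure A) = 0 := by
  have hlim : Tendsto (fun t : ℝ => ENNReal.ofReal (t ^ ((N : ℝ) - r))) (𝓝[>] 0) (𝓝 0) := by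
    have := tendsto_nhdsWithin_of_tendsto_nhds (s := Ioi 0)
      ((Real.continuous_rpow_const (sub_pos.2 hr).le).tendsto 0)
    simpa [Real.zero_rpow (sub_pos.2 hr).ne'] using ENNReal.tendsto_ofReal this
  refine le_antisymm (ge_of_tendsto hlim ?_) bot_le
  filter_upwards [eventually_volume_thickening_le h, self_mem_nhdsWithin] with t ht ht0
  exact (measure_mono (closure_subset_thickening ht0 A)).trans ht

lemma integrableOn_measureReal_thickening_mul_rpow (hb : Bornology.IsBounded A) {r σ δ : ℝ}
    (h : upperMink N A r = 0) (hrσ : r < σ) :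
    IntegrableOn (fun t => volume.real (thickening t A) * t ^ (σ - N - 1)) (Ioc 0 δ) := by
  obtain ⟨u, hu, hsub⟩ := mem_nhdsGT_iff_exists_Ioc_subset.1 (eventually_volume_thickening_le h)
  have hnear :
      IntegrableOn (fun t => volume.real (thickening t A) * t ^ (σ - N - 1)) (Ioc 0 u) := by
    have hdom : IntegrableOn (fun t : ℝ => t ^ (σ - r - 1)) (Ioc 0 u) := by
      rw [← intervalIntegrable_iff_integrableOn_Ioc_of_le (le_of_lt hu)]
      exact intervalIntegral.intervalIntegrable_rpow' (by linarith)
    refine hdom.mono'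
      (measurable_measureReal_thickening.mul (measurable_id.pow_const _)).aestronglyMeasurable ?_
    filter_upwards [ae_restrict_mem measurableSet_Ioc] with t ht
    have ht0 : 0 < t := ht.1
    have hvol : volume.real (thickening t A) ≤ t ^ ((N : ℝ) - r) :=
      ENNReal.toReal_le_of_le_ofReal (by positivity) (hsub ht)
    rw [Real.norm_of_nonneg (by positivity)]
    calc _ ≤ t ^ ((N : ℝ) - r) * t ^ (σ - N - 1) := by gcongr
      _ = t ^ (σ - r - 1) := by rw [← Real.rpow_add ht0]; ring_nf
  have hfar : IntegrableOn (fun t => volume.real (thickening t A) * t ^ (σ - N - 1)) (Icc u δ) :=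
    (MonotoneOn.integrableOn_isCompact isCompact_Icc fun _ _ _ _ hst =>
      measureReal_mono (thickening_mono hst A) hb.thickening.measure_lt_top.ne).mul_continuousOn
      (fun t ht => (Real.continuousAt_rpow_const _ _
        (Or.inl (hu.trans_le ht.1).ne')).continuousWithinAt) isCompact_Icc
  exact (hnear.union hfar).mono_set fun t ht =>
    (le_or_gt t u).imp (fun h => ⟨ht.1, h⟩) (fun h => ⟨h.le, ht.2⟩)

end Minkowski

theorem stmt4_general (N : ℕ) (A : Set (EuclideanSpace ℝ (Fin N)))
    (hA : A.Nonempty) (hb : Bornology.IsBounded A) (δ : ℝ) :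
    ∀ s : ℂ, upperBoxDim N A < s.re →
      IntegrableOn
        (fun t : ℝ => (t : ℂ) ^ (s - (N : ℂ) - 1) * ((volume (thickening t A)).toReal : ℂ))
        (Ioc 0 δ) volume ∧
      ∫ x in thickening δ A, (Metric.infDist x A : ℂ) ^ (s - (N : ℂ)) =
        (δ : ℂ) ^ (s - (N : ℂ)) * ((volume (thickening δ A)).toReal : ℂ) +
        ((N : ℂ) - s) *
          ∫ t in Ioc (0 : ℝ) δ,
            (t : ℂ) ^ (s - (N : ℂ) - 1) * ((volume (thickening t A)).toReal : ℂ) := by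
  intro s hs
  obtain ⟨r, hrs, hr⟩ := exists_lt_upperMink_eq_zero hb hs
  have hint : IntegrableOn (fun t => volume.real (thickening t A) * ‖(t : ℂ) ^ (s - N - 1)‖)
      (Ioc 0 δ) :=
    (integrableOn_measureReal_thickening_mul_rpow hb hr hrs).congr_fun
      (fun t ht => by simp [Complex.norm_cpow_eq_rpow_re_of_pos ht.1]) measurableSet_Ioc
  refine ⟨integrableOn_cpow_mul_measureReal_thickening hint, ?_⟩
  rcases eq_or_ne s N with rfl | hsN
  · simp [measureReal_def]
  have hreg : 0 < (s - N).re ∨ volume (closure A) = 0 := by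
    rcases lt_or_ge (N : ℝ) s.re with h | h
    · exact Or.inl (by simpa using h)
    · exact Or.inr (volume_closure_eq_zero_of_upperMink_eq_zero hr (hrs.trans_le h))
  rw [setIntegral_infDist_cpow hA hb.thickening.measure_lt_top.ne (sub_ne_zero.2 hsN) hreg hint]
  simp only [measureReal_def]
  ring

/-- for `Re s > dim̄_B A`, the tube zeta integral converges absolutely and
`∫_{A_δ} d(x,A)^{s−N} dx = δ^{s−N}|A_δ| + (N−s) ∫_0^δ t^{s−N−1}|A_t| dt`. -/
theorem stmt4 (N : ℕ) (hN : 1 ≤ N) (A : Set (EuclideanSpace ℝ (Fin N)))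
    (hA : A.Nonempty) (hb : Bornology.IsBounded A) (δ : ℝ) (hδ : 0 < δ) :
    ∀ s : ℂ, upperBoxDim N A < s.re →
      IntegrableOn
        (fun t : ℝ => (t : ℂ) ^ (s - (N : ℂ) - 1) * ((volume (thickening t A)).toReal : ℂ))
        (Ioc 0 δ) volume ∧
      ∫ x in thickening δ A, (Metric.infDist x A : ℂ) ^ (s - (N : ℂ)) =
        (δ : ℂ) ^ (s - (N : ℂ)) * ((volume (thickening δ A)).toReal : ℂ) +
        ((N : ℂ) - s) *
          ∫ t in Ioc (0 : ℝ) δ,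
            (t : ℂ) ^ (s - (N : ℂ) - 1) * ((volume (thickening t A)).toReal : ℂ) :=
  stmt4_general N A hA hb δ
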